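/- Splitting lemma for tours: let γ be a closed tour through s of length |γ| in a simple polygon, and suppose every point of γ is at geodesic distance at most r from s. Divide γ into k consecutive subpaths of equal length |γ|/k with breakpoints a_1 = s, a_2, …, a_k, a_{k+1} = s, and set γ'_i = π(s,a_i) ∪ γ_{a_i a_{i+1}} ∪ π(a_{i+1}, s). Then each γ'_i is a closed tour through s of length at most |γ|/k + 2r, and the union of the γ'_i contains γ (hence their collective visibility region contains that of γ). -/

import Mathlib

open Set

theorem Set.iUnion_fin_Icc_natCast_mul {α : Type*} [Semiring α] [LinearOrder α]
    [IsOrderedRing α] {c : α} (hc : 0 ≤ c) {k : ℕ} (hk : 0 < k) :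
    ⋃ i : Fin k, Icc ((i : ℕ) * c) (((i : ℕ) + 1) * c) = Icc 0 (k * c) := by
  induction k, hk using Nat.le_induction with
  | base => simp [iUnion_const]
  | succ n _ ih =>
    rw [iUnion_fin_add_one_eq_iUnion_castSucc]
    simp only [Function.comp_def, Fin.val_castSucc, Fin.val_last, ih, Nat.cast_add_one]
    exact Icc_union_Icc_eq_Icc (by positivity)
      ((le_add_of_nonneg_right hc).trans_eq (add_one_mul _ _).symm)

theorem stmt9_general (s : ℝ × ℝ) (gd : ℝ × ℝ → ℝ × ℝ → ℝ)
    (k : ℕ) (hk : 0 < k) (γ : ℝ → ℝ × ℝ) (ℓ r : ℝ) (hℓ : 0 ≤ ℓ)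
    (hgd : ∀ t ∈ Set.Icc (0:ℝ) ℓ, gd s (γ t) ≤ r)
    (hsymm : ∀ x y, gd x y = gd y x) :
    (∀ i : Fin k,
        gd s (γ (((i : ℕ) : ℝ) * (ℓ / k))) + ℓ / k +
          gd (γ ((((i : ℕ) : ℝ) + 1) * (ℓ / k))) s ≤ ℓ / k + 2 * r) ∧
      (⋃ i : Fin k, γ '' Set.Icc (((i : ℕ) : ℝ) * (ℓ / k)) ((((i : ℕ) : ℝ) + 1) * (ℓ / k)))
        = γ '' Set.Icc 0 ℓ := by
  have hc : 0 ≤ ℓ / k := by positivity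
  have htiling := iUnion_fin_Icc_natCast_mul hc hk
  rw [mul_div_cancel₀ ℓ (Nat.cast_ne_zero.mpr hk.ne')] at htiling
  refine ⟨fun i => ?_, by rw [← image_iUnion, htiling]⟩
  have hpiece : Icc ((i : ℕ) * (ℓ / k)) (((i : ℕ) + 1) * (ℓ / k)) ⊆ Icc 0 ℓ :=
    htiling ▸ subset_iUnion_of_subset i subset_rfl
  have hstep : ((i : ℕ) : ℝ) * (ℓ / k) ≤ (((i : ℕ) : ℝ) + 1) * (ℓ / k) :=
    mul_le_mul_of_nonneg_right (le_add_of_nonneg_right zero_le_one) hc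
  have hleft := hgd _ (hpiece (left_mem_Icc.mpr hstep))
  have hright := hgd _ (hpiece (right_mem_Icc.mpr hstep))
  rw [hsymm] at hright
  linarith

/-- Splitting lemma for tours: a closed tour `γ` through `s` of length `ℓ`, arc-length
parameterized on `[0, ℓ]`, all of whose points are at geodesic distance at most `r` from
`s`, splits into `k` subpaths of equal length `ℓ/k`; joining the breakpoints to `s` by
geodesics yields `k` closed tours through `s`, each of length at most `ℓ/k + 2r`, whose
union covers `γ`. -/
theorem stmt9 (s : ℝ × ℝ) (gd : ℝ × ℝ → ℝ × ℝ → ℝ)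
    (k : ℕ) (hk : 0 < k) (γ : ℝ → ℝ × ℝ) (ℓ r : ℝ) (hℓ : 0 ≤ ℓ) (hr : 0 ≤ r)
    (hstart : γ 0 = s) (hend : γ ℓ = s)
    (hgd : ∀ t ∈ Set.Icc (0:ℝ) ℓ, gd s (γ t) ≤ r)
    (hsymm : ∀ x y, gd x y = gd y x) :
    (∀ i : Fin k,
        gd s (γ (((i : ℕ) : ℝ) * (ℓ / k))) + ℓ / k +
          gd (γ ((((i : ℕ) : ℝ) + 1) * (ℓ / k))) s ≤ ℓ / k + 2 * r) ∧
      (⋃ i : Fin k, γ '' Set.Icc (((i : ℕ) : ℝ) * (ℓ / k)) ((((i : ℕ) : ℝ) + 1) * (ℓ / k)))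
        = γ '' Set.Icc 0 ℓ :=
  stmt9_general s gd k hk γ ℓ r hℓ hgd hsymm
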